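/- If a tuple of transpositions in S_d generates a transitive subgroup of S_d and has product the identity, then the tuple has at least 2(d-1) entries. -/

import Mathlib

/-!
Multiply the transpositions in one at a time, and track the number `c` of cycles of the partial
product (fixed points included) and the number `k` of orbits of the group generated so far.
Multiplying by a transposition `(x y)` changes `c` by at most one, and lowers it when `x` and `y`
lie in different cycles; it lowers `k` by at most one, and not at all when `x` and `y` already lie
in one orbit, which is the case whenever they lie in one cycle. So `d + c ≤ n + 2 k` holds for the
empty product (`c = k = d`) and persists. For the whole tuple, `c = d` because the product is `1`
and `k = 1` by transitivity, whence `2 d ≤ n + 2`.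
-/

open Equiv Equiv.Perm Function

namespace Setoid

variable {α : Type*}

open Classical in
/-- The join of `r` with `x ~ y`: the kernel of the map sending the class of `y` to that of `x`. -/
noncomputable def mergeClasses (r : Setoid α) (x y : α) : Setoid α :=
  ker fun a => if r a y then (⟦x⟧ : Quotient r) else ⟦a⟧

variable {r s : Setoid α} {x y : α}

open Classical in
theorem mergeClasses_iff {a b : α} : r.mergeClasses x y a b ↔
    (if r a y then (⟦x⟧ : Quotient r) else ⟦a⟧) = if r b y then ⟦x⟧ else ⟦b⟧ := Iff.rfl

theorem le_mergeClasses : r ≤ r.mergeClasses x y := by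
  intro a b hab
  have hy : r a y ↔ r b y := ⟨r.trans' (r.symm' hab), r.trans' hab⟩
  rw [mergeClasses_iff, Quotient.sound hab]
  split_ifs <;> tauto

theorem mergeClasses_rel : r.mergeClasses x y x y := by
  simp [mergeClasses_iff]

theorem mergeClasses_eq_self (h : r x y) : r.mergeClasses x y = r := by
  classical
  have hmk : ∀ a, (if r a y then (⟦x⟧ : Quotient r) else ⟦a⟧) = ⟦a⟧ := fun a => by
    split_ifs with ha
    exacts [Quotient.sound (r.trans' h (r.symm' ha)), rfl]
  ext a b
  rw [mergeClasses_iff, hmk, hmk, Quotient.eq]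

theorem card_quotient_le_of_le [Finite α] (h : r ≤ s) :
    Nat.card (Quotient s) ≤ Nat.card (Quotient r) :=
  Nat.card_le_card_of_surjective (Quotient.map' id h) fun q =>
    q.inductionOn' fun a => ⟨⟦a⟧, rfl⟩

theorem card_quotient_lt_of_le [Finite α] (h : r ≤ s) (hs : s x y) (hr : ¬ r x y) :
    Nat.card (Quotient s) < Nat.card (Quotient r) := by
  have hsurj : Surjective (Quotient.map' id h) := fun q => q.inductionOn' fun a => ⟨⟦a⟧, rfl⟩
  refine lt_of_not_ge fun hle => hr (Quotient.exact ?_)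
  exact (hsurj.bijective_of_nat_card_le hle).injective (Quotient.sound hs)

theorem card_quotient_eq_card_of_le_bot (h : r ≤ ⊥) : Nat.card (Quotient r) = Nat.card α :=
  (Nat.card_congr (Equiv.ofBijective _
    ⟨fun _ _ hab => h (Quotient.exact hab), Quotient.mk_surjective⟩)).symm

theorem card_quotient_le_card_quotient_mergeClasses_add_one [Finite α] :
    Nat.card (Quotient r) ≤ Nat.card (Quotient (r.mergeClasses x y)) + 1 := by
  classical
  set f : α → Quotient r := fun a => if r a y then ⟦x⟧ else ⟦a⟧
  have hcover : (Set.univ : Set (Quotient r)) ⊆ insert ⟦y⟧ (Set.range f) := by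
    rintro q -
    induction q using Quotient.inductionOn with | h a => ?_
    by_cases ha : r a y
    · exact Or.inl (Quotient.sound ha)
    · exact Or.inr ⟨a, if_neg ha⟩
  calc Nat.card (Quotient r) = (Set.univ : Set (Quotient r)).ncard := Set.ncard_univ _ |>.symm
    _ ≤ (insert ⟦y⟧ (Set.range f)).ncard := Set.ncard_le_ncard hcover
    _ ≤ (Set.range f).ncard + 1 := Set.ncard_insert_le _ _
    _ = Nat.card (Quotient (r.mergeClasses x y)) + 1 := by
      rw [← Nat.card_coe_set_eq, ← Nat.card_congr (quotientKerEquivRange f)]; rfl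

def classPreservingPerms (r : Setoid α) : Subgroup (Perm α) where
  carrier := {g | ∀ z, r z (g z)}
  one_mem' z := r.refl' z
  mul_mem' hg hh z := r.trans' (hh z) (hg _)
  inv_mem' {g} hg z := by simpa using r.symm' (hg (g⁻¹ z))

theorem classPreservingPerms_mono (h : r ≤ s) : r.classPreservingPerms ≤ s.classPreservingPerms :=
  fun _ hg z => h (hg z)

theorem swap_mem_classPreservingPerms [DecidableEq α] (h : r x y) :
    swap x y ∈ r.classPreservingPerms := by
  intro z
  rcases eq_or_ne z x with rfl | hx
  · simpa using h
  rcases eq_or_ne z y with rfl | hy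
  · simpa using r.symm' h
  · rw [swap_apply_of_ne_of_ne hx hy]

theorem rel_of_sameCycle {σ : Perm α} (hσ : σ ∈ r.classPreservingPerms) {a b : α}
    (h : σ.SameCycle a b) : r a b := by
  obtain ⟨i, rfl⟩ := h
  exact zpow_mem hσ i a

theorem orbitRel_le_of_le_classPreservingPerms {H : Subgroup (Perm α)}
    (hH : H ≤ r.classPreservingPerms) : MulAction.orbitRel H α ≤ r := by
  rintro a b ⟨g, rfl⟩
  exact r.symm' (hH g.2 b)

theorem le_classPreservingPerms_orbitRel (H : Subgroup (Perm α)) :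
    H ≤ (MulAction.orbitRel H α).classPreservingPerms :=
  fun g hg _ => Setoid.symm' _ ⟨⟨g, hg⟩, rfl⟩

end Setoid

namespace Equiv.Perm

variable {α : Type*}

open Setoid MulAction Subgroup

/-- Fixed points count as cycles, unlike in `Equiv.Perm.cycleType`. -/
noncomputable def numCycles (σ : Perm α) : ℕ := Nat.card (Quotient (SameCycle.setoid σ))

noncomputable def numOrbits (H : Subgroup (Perm α)) : ℕ := Nat.card (orbitRel.Quotient H α)

theorem numCycles_one : numCycles (1 : Perm α) = Nat.card α :=
  card_quotient_eq_card_of_le_bot fun _ _ => sameCycle_one.1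

theorem numOrbits_bot : numOrbits (⊥ : Subgroup (Perm α)) = Nat.card α :=
  card_quotient_eq_card_of_le_bot fun _ _ ⟨⟨g, hg⟩, hgab⟩ => by
    simpa [mem_bot.1 hg] using hgab.symm

theorem self_mem_classPreservingPerms_sameCycle (σ : Perm α) :
    σ ∈ (SameCycle.setoid σ).classPreservingPerms :=
  fun _ => SameCycle.refl σ _ |>.apply_right

variable [DecidableEq α] {σ : Perm α} {S : Set (Perm α)} {x y : α}

theorem sameCycle_swap_mul_le :
    SameCycle.setoid (swap x y * σ) ≤ (SameCycle.setoid σ).mergeClasses x y :=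
  fun _ _ => rel_of_sameCycle <| mul_mem (swap_mem_classPreservingPerms mergeClasses_rel)
    (classPreservingPerms_mono le_mergeClasses (self_mem_classPreservingPerms_sameCycle σ))

theorem orbitRel_closure_insert_swap_le :
    orbitRel (closure (insert (swap x y) S)) α ≤ (orbitRel (closure S) α).mergeClasses x y :=
  orbitRel_le_of_le_classPreservingPerms <| closure_le _ |>.2 <|
    Set.insert_subset (swap_mem_classPreservingPerms mergeClasses_rel) <|
      subset_closure.trans <| (le_classPreservingPerms_orbitRel _).trans <|
        classPreservingPerms_mono le_mergeClasses

variable [Finite α]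

theorem sameCycle_swap_mul_of_not_sameCycle (h : ¬σ.SameCycle x y) :
    (swap x y * σ).SameCycle x y := by
  obtain ⟨m, hm⟩ : ∃ m, minimalPeriod σ x = m + 1 := Nat.exists_eq_succ_of_ne_zero
    (minimalPeriod_pos_of_mem_periodicPts (σ.injective.mem_periodicPts x)).ne'
  -- Until it returns to `x`, the `σ`-orbit of `x` avoids `x` and `y`, where `swap x y` acts.
  have hagree : ∀ k ≤ m, ((swap x y * σ) ^ k) x = (σ ^ k) x := by
    intro k
    induction k with
    | zero => simp
    | succ k ih =>
      intro hk
      have hx : (σ ^ (k + 1)) x ≠ x := by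
        rw [coe_pow]
        exact not_isPeriodicPt_of_pos_of_lt_minimalPeriod k.succ_ne_zero (by omega)
      have hy : (σ ^ (k + 1)) x ≠ y := fun e => h (e ▸ sameCycle_pow_right.2 (SameCycle.refl _ _))
      rw [pow_succ', mul_apply, mul_apply, ih (by omega), ← mul_apply σ, ← pow_succ',
        swap_apply_of_ne_of_ne hx hy]
  have hsame := (sameCycle_pow_right (n := m + 1)).2 (SameCycle.refl (swap x y * σ) x)
  rwa [pow_succ', mul_apply, mul_apply, hagree m le_rfl, ← mul_apply σ, ← pow_succ', coe_pow,
    ← hm, iterate_minimalPeriod, swap_apply_left] at hsame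

theorem sameCycle_le_sameCycle_swap_mul (h : ¬σ.SameCycle x y) :
    SameCycle.setoid σ ≤ SameCycle.setoid (swap x y * σ) := by
  have hmem := mul_mem (swap_mem_classPreservingPerms (sameCycle_swap_mul_of_not_sameCycle h))
    (self_mem_classPreservingPerms_sameCycle (swap x y * σ))
  rw [swap_mul_self_mul] at hmem
  exact fun _ _ => rel_of_sameCycle hmem

theorem numCycles_swap_mul_le : numCycles (swap x y * σ) ≤ numCycles σ + 1 := by
  have hle : SameCycle.setoid σ ≤ (SameCycle.setoid (swap x y * σ)).mergeClasses x y := by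
    simpa only [swap_mul_self_mul] using sameCycle_swap_mul_le (x := x) (y := y) (σ := swap x y * σ)
  exact card_quotient_le_card_quotient_mergeClasses_add_one.trans <|
    Nat.add_le_add_right (card_quotient_le_of_le hle) 1

theorem numCycles_swap_mul_lt (h : ¬σ.SameCycle x y) :
    numCycles (swap x y * σ) < numCycles σ :=
  card_quotient_lt_of_le (sameCycle_le_sameCycle_swap_mul h)
    (sameCycle_swap_mul_of_not_sameCycle h) h

theorem numOrbits_closure_le_numOrbits_closure_insert_swap_add_one :
    numOrbits (closure S) ≤ numOrbits (closure (insert (swap x y) S)) + 1 :=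
  card_quotient_le_card_quotient_mergeClasses_add_one.trans <|
    Nat.add_le_add_right (card_quotient_le_of_le orbitRel_closure_insert_swap_le) 1

theorem numOrbits_closure_le_numOrbits_closure_insert_swap (h : orbitRel (closure S) α x y) :
    numOrbits (closure S) ≤ numOrbits (closure (insert (swap x y) S)) :=
  card_quotient_le_of_le (mergeClasses_eq_self h ▸ orbitRel_closure_insert_swap_le)

theorem card_add_numCycles_prod_le (l : List (Perm α)) (hl : ∀ τ ∈ l, τ.IsSwap) :
    Nat.card α + numCycles l.prod ≤ l.length + 2 * numOrbits (closure {τ | τ ∈ l}) := by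
  induction l with
  | nil => simp [numCycles_one, numOrbits_bot, two_mul]
  | cons τ l ih =>
    obtain ⟨x, y, -, rfl⟩ := hl τ List.mem_cons_self
    have ih := ih fun τ hτ => hl τ (List.mem_cons_of_mem _ hτ)
    have hS : {τ | τ ∈ swap x y :: l} = insert (swap x y) {τ | τ ∈ l} := by
      ext; simp
    rw [List.prod_cons, List.length_cons, hS]
    by_cases hxy : l.prod.SameCycle x y
    · have horbit : orbitRel (closure {τ | τ ∈ l}) α x y :=
        rel_of_sameCycle (le_classPreservingPerms_orbitRel _
          (list_prod_mem fun τ hτ => subset_closure hτ)) hxy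
      have hcycles := numCycles_swap_mul_le (σ := l.prod) (x := x) (y := y)
      have horbits := numOrbits_closure_le_numOrbits_closure_insert_swap horbit
      omega
    · have hcycles := numCycles_swap_mul_lt hxy
      have horbits := numOrbits_closure_le_numOrbits_closure_insert_swap_add_one
        (S := {τ | τ ∈ l}) (x := x) (y := y)
      omega

theorem two_mul_card_sub_one_le_length (l : List (Perm α)) (hl : ∀ τ ∈ l, τ.IsSwap)
    (hprod : l.prod = 1) [IsPretransitive (closure {τ | τ ∈ l}) α] :
    2 * (Nat.card α - 1) ≤ l.length := by
  have key := card_add_numCycles_prod_le l hl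
  have horbits : numOrbits (closure {τ | τ ∈ l}) ≤ 1 :=
    Finite.card_le_one_iff_subsingleton.2 ((pretransitive_iff_subsingleton_quotient _ _).1 ‹_›)
  rw [hprod, numCycles_one] at key
  omega

end Equiv.Perm

theorem length_ge_of_transitive_general {d : ℕ}
    (l : List (Equiv.Perm (Fin d))) (hswap : ∀ a ∈ l, a.IsSwap)
    (hprod : l.prod = 1)
    (htrans : ∀ x y : Fin d, ∃ h ∈ Subgroup.closure {a | a ∈ l}, h x = y) :
    2 * (d - 1) ≤ l.length := by
  have : MulAction.IsPretransitive (Subgroup.closure {a | a ∈ l}) (Fin d) :=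
    ⟨fun x y => let ⟨h, hmem, hxy⟩ := htrans x y; ⟨⟨h, hmem⟩, hxy⟩⟩
  simpa using Equiv.Perm.two_mul_card_sub_one_le_length l hswap hprod

/-- If a tuple of transpositions in `S_d` generates a transitive subgroup and has
product the identity, then the tuple has at least `2(d-1)` entries. -/
theorem length_ge_of_transitive {d : ℕ} (hd : 2 ≤ d)
    (l : List (Equiv.Perm (Fin d))) (hswap : ∀ a ∈ l, a.IsSwap)
    (hprod : l.prod = 1)
    (htrans : ∀ x y : Fin d, ∃ h ∈ Subgroup.closure {a | a ∈ l}, h x = y) :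
    2 * (d - 1) ≤ l.length :=
  length_ge_of_transitive_general l hswap hprod htrans
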